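/- Let p be a pmf on X×Y (X, Y finite), let W_A be a channel from X to a finite set A, and let W_B be a channel from Y to a finite set B, so that the joint pmf p(a,x,y,b) = W_A(a|x)·p(x,y)·W_B(b|y) realizes the Markov chain A → X → Y → B. Let p_{AB}(a,b) = Σ_{x,y} W_A(a|x)·p(x,y)·W_B(b|y). Then for every α ∈ (0,1) ∪ (1,∞], J_α(p_{AB}) ≤ J_α(p). -/

import Mathlib

/-- A probability mass function on a finite set `S`. -/
def IsPMF {S : Type*} [Fintype S] (p : S → ℝ) : Prop :=
  (∀ s, 0 ≤ p s) ∧ ∑ s, p s = 1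

open Classical in
/-- Rényi divergence of order `α ∈ (0,1) ∪ (1,∞]` between finitely supported
distributions, with values in `(-∞,∞]`:
`D_α(p‖q) = (α−1)⁻¹ · log Σ_{s : p(s)>0} p(s)^α q(s)^{1−α}` for finite `α`, equal to
`+∞` if `α > 1` and `supp p ⊄ supp q`, and
`D_∞(p‖q) = log max_{s : p(s)>0} p(s)/q(s)`, equal to `+∞` if `supp p ⊄ supp q`. -/
noncomputable def renyiD {S : Type*} [Fintype S] (α : ENNReal) (p q : S → ℝ) : EReal :=
  if α = ⊤ then
    (if ∀ s, 0 < p s → 0 < q s then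
      ((Real.log (sSup { r : ℝ | ∃ s, 0 < p s ∧ r = p s / q s }) : ℝ) : EReal)
    else ⊤)
  else if 1 < α ∧ ¬ ∀ s, 0 < p s → 0 < q s then ⊤
  else (((α.toReal - 1)⁻¹ *
      Real.log (∑ s ∈ Finset.univ.filter (fun s => 0 < p s),
        p s ^ α.toReal * q s ^ (1 - α.toReal)) : ℝ) : EReal)

/-- The correlation measure `J_α(p) = D_α(q‖r)` where
`q((x₁,y₁),(x₂,y₂)) = p(x₁,y₁)·p(x₂,y₂)` and
`r((x₁,y₁),(x₂,y₂)) = p(x₁,y₂)·p(x₂,y₁)`. -/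
noncomputable def Jalpha {X Y : Type*} [Fintype X] [Fintype Y] (α : ENNReal)
    (p : X × Y → ℝ) : EReal :=
  renyiD α (fun t : (X × Y) × (X × Y) => p t.1 * p t.2)
    (fun t : (X × Y) × (X × Y) => p (t.1.1, t.2.2) * p (t.2.1, t.1.2))

/-!
`J_α(p)` is the Rényi divergence between `q = p ⊗ p` and its image `r` under exchanging the
two `Y`-coordinates. The product channel `K = (W_A ⊗ W_B) ⊗ (W_A ⊗ W_B)` commutes with that
exchange, so it maps `q` and `r` to the corresponding pair for `p_AB`, and the theorem is the
data-processing inequality `D_α(Kq‖Kr) ≤ D_α(q‖r)` for a single channel `K`. Writing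
`Σ_s q(s)^α r(s)^{1-α} = Σ_t Σ_s (K(t|s)q(s))^α (K(t|s)r(s))^{1-α}`, the latter follows for
each output `t` from Hölder's inequality when `α < 1` and from Jensen's inequality for `x ↦ x^α`
when `α > 1`; for `α = ∞` it follows from `q ≤ M r ⇒ Kq ≤ M Kr`.
-/

open Finset Real

lemma IsPMF.exists_pos {S : Type*} [Fintype S] {p : S → ℝ} (hp : IsPMF p) : ∃ s, 0 < p s := by
  obtain ⟨s, -, hs⟩ := (sum_pos_iff_of_nonneg fun s _ => hp.1 s).1 (hp.2 ▸ one_pos)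
  exact ⟨s, hs⟩

lemma IsPMF.prod {S S' : Type*} [Fintype S] [Fintype S'] {p : S → ℝ} {p' : S' → ℝ}
    (hp : IsPMF p) (hp' : IsPMF p') : IsPMF fun s : S × S' => p s.1 * p' s.2 :=
  ⟨fun s => mul_nonneg (hp.1 _) (hp'.1 _),
    by rw [Fintype.sum_prod_type, ← Fintype.sum_mul_sum, hp.2, hp'.2, one_mul]⟩

section Inequalities

variable {ι : Type*} (s : Finset ι) {u v : ι → ℝ} {a : ℝ}

lemma sum_rpow_mul_rpow_one_sub_le (ha0 : 0 < a) (ha1 : a < 1) (hu : ∀ i ∈ s, 0 ≤ u i)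
    (hv : ∀ i ∈ s, 0 ≤ v i) :
    ∑ i ∈ s, u i ^ a * v i ^ (1 - a) ≤ (∑ i ∈ s, u i) ^ a * (∑ i ∈ s, v i) ^ (1 - a) := by
  have hb : 0 < 1 - a := sub_pos.2 ha1
  have holder := inner_le_Lp_mul_Lq_of_nonneg s (holderConjugate_one_div ha0 hb (by ring))
    (fun i hi => rpow_nonneg (hu i hi) a) (fun i hi => rpow_nonneg (hv i hi) (1 - a))
  simp only [one_div, inv_inv] at holder
  rwa [sum_congr rfl fun i hi => rpow_rpow_inv (hu i hi) ha0.ne',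
    sum_congr rfl fun i hi => rpow_rpow_inv (hv i hi) hb.ne'] at holder

lemma le_sum_rpow_mul_rpow_one_sub_of_pos (ha : 1 < a) (hu : ∀ i ∈ s, 0 ≤ u i)
    (hv : ∀ i ∈ s, 0 < v i) :
    (∑ i ∈ s, u i) ^ a * (∑ i ∈ s, v i) ^ (1 - a) ≤ ∑ i ∈ s, u i ^ a * v i ^ (1 - a) := by
  rcases s.eq_empty_or_nonempty with rfl | hs
  · simp [zero_rpow (by linarith : a ≠ 0)]
  set U := ∑ i ∈ s, u i
  set V := ∑ i ∈ s, v i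
  have hV : 0 < V := sum_pos hv hs
  have jensen := rpow_arith_mean_le_arith_mean_rpow s (fun i => v i / V) (fun i => u i / v i)
    (fun i hi => (div_pos (hv i hi) hV).le) (by rw [← sum_div, div_self hV.ne'])
    (fun i hi => div_nonneg (hu i hi) (hv i hi).le) ha.le
  have hmean : ∑ i ∈ s, v i / V * (u i / v i) = U / V := by
    rw [sum_div]
    exact sum_congr rfl fun i hi => by field_simp [(hv i hi).ne']
  have hpow : ∀ i ∈ s, v i / V * (u i / v i) ^ a = u i ^ a * v i ^ (1 - a) / V := by
    intro i hi
    rw [div_rpow (hu i hi) (hv i hi).le, rpow_sub (hv i hi), rpow_one]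
    field_simp
  rw [hmean, sum_congr rfl hpow, ← sum_div] at jensen
  calc U ^ a * V ^ (1 - a) = (U / V) ^ a * V := by
        rw [div_rpow (sum_nonneg hu) hV.le, rpow_sub hV, rpow_one, div_mul_eq_mul_div,
          mul_div_assoc]
    _ ≤ (∑ i ∈ s, u i ^ a * v i ^ (1 - a)) / V * V := by gcongr
    _ = ∑ i ∈ s, u i ^ a * v i ^ (1 - a) := div_mul_cancel₀ _ hV.ne'

lemma le_sum_rpow_mul_rpow_one_sub (ha : 1 < a) (hu : ∀ i ∈ s, 0 ≤ u i)
    (hv : ∀ i ∈ s, 0 ≤ v i) (huv : ∀ i ∈ s, v i = 0 → u i = 0) :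
    (∑ i ∈ s, u i) ^ a * (∑ i ∈ s, v i) ^ (1 - a) ≤ ∑ i ∈ s, u i ^ a * v i ^ (1 - a) := by
  have hsupp : ∀ i ∈ s, i ∉ s.filter (fun i => 0 < v i) → u i = 0 := fun i hi hi' =>
    huv i hi ((hv i hi).eq_of_not_lt fun h => hi' (mem_filter.2 ⟨hi, h⟩)).symm
  calc (∑ i ∈ s, u i) ^ a * (∑ i ∈ s, v i) ^ (1 - a)
      = (∑ i ∈ s.filter (fun i => 0 < v i), u i) ^ a *
          (∑ i ∈ s.filter (fun i => 0 < v i), v i) ^ (1 - a) := by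
        rw [sum_filter_of_ne fun i hi hne => ?_, sum_filter_of_ne fun i hi hne => ?_]
        · exact (hv i hi).lt_of_ne' hne
        · exact by_contra fun h => hne (hsupp i hi (by simpa [hi] using h))
    _ ≤ ∑ i ∈ s.filter (fun i => 0 < v i), u i ^ a * v i ^ (1 - a) :=
        le_sum_rpow_mul_rpow_one_sub_of_pos _ ha (fun i hi => hu i (mem_filter.1 hi).1)
          fun i hi => (mem_filter.1 hi).2
    _ ≤ ∑ i ∈ s, u i ^ a * v i ^ (1 - a) :=
        sum_le_sum_of_subset_of_nonneg (filter_subset _ _) fun i hi _ =>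
          mul_nonneg (rpow_nonneg (hu i hi) a) (rpow_nonneg (hv i hi) _)

end Inequalities

section Channel

variable {S T : Type*} [Fintype S] {K : S → T → ℝ} {q r : S → ℝ}

def channelMap (K : S → T → ℝ) (q : S → ℝ) (t : T) : ℝ := ∑ s, K s t * q s

lemma channelMap_nonneg (hK : ∀ s t, 0 ≤ K s t) (hq : ∀ s, 0 ≤ q s) (t : T) :
    0 ≤ channelMap K q t :=
  sum_nonneg fun s _ => mul_nonneg (hK s t) (hq s)

lemma channelMap_pos (hK : ∀ s t, 0 ≤ K s t) (hq : ∀ s, 0 ≤ q s) {s : S} {t : T}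
    (hKst : 0 < K s t) (hqs : 0 < q s) : 0 < channelMap K q t :=
  (mul_pos hKst hqs).trans_le <| single_le_sum (f := fun s => K s t * q s)
    (fun s _ => mul_nonneg (hK s t) (hq s)) (mem_univ s)

lemma channelMap_support_subset (hK : ∀ s t, 0 ≤ K s t) (hq : ∀ s, 0 ≤ q s)
    (hr : ∀ s, 0 ≤ r s) (hqr : ∀ s, 0 < q s → 0 < r s) :
    ∀ t, 0 < channelMap K q t → 0 < channelMap K r t := by
  intro t ht
  obtain ⟨s, -, hs⟩ := (sum_pos_iff_of_nonneg fun s _ => mul_nonneg (hK s t) (hq s)).1 ht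
  exact channelMap_pos hK hr (pos_of_mul_pos_left hs (hq s))
    (hqr s (pos_of_mul_pos_right hs (hK s t)))

lemma exists_channelMap_pos [Fintype T] (hK : ∀ s, IsPMF (K s)) (hq : ∀ s, 0 ≤ q s)
    (hr : ∀ s, 0 ≤ r s) (hqr : ∃ s, 0 < q s ∧ 0 < r s) :
    ∃ t, 0 < channelMap K q t ∧ 0 < channelMap K r t := by
  obtain ⟨s, hqs, hrs⟩ := hqr
  obtain ⟨t, ht⟩ := (hK s).exists_pos
  exact ⟨t, channelMap_pos (fun s => (hK s).1) hq ht hqs,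
    channelMap_pos (fun s => (hK s).1) hr ht hrs⟩

lemma channelMap_le_mul (hK : ∀ s t, 0 ≤ K s t) {c : ℝ} (h : ∀ s, q s ≤ c * r s) (t : T) :
    channelMap K q t ≤ c * channelMap K r t := by
  rw [channelMap, channelMap, mul_sum]
  exact sum_le_sum fun s _ => by
    rw [mul_left_comm]
    exact mul_le_mul_of_nonneg_left (h s) (hK s t)

lemma channelMap_comp_of_involutive {σ : S → S} {τ : T → T} (hσ : σ.Involutive)
    (hτ : τ.Involutive) (hK : ∀ s t, K (σ s) (τ t) = K s t) (t : T) :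
    channelMap K (q ∘ σ) t = channelMap K q (τ t) := by
  rw [channelMap, ← Equiv.sum_comp (hσ.toPerm σ)]
  refine sum_congr rfl fun s _ => ?_
  simp only [Function.Involutive.coe_toPerm, Function.comp_apply, hσ s]
  rw [← hK s (τ t), hτ t]

end Channel

section RenyiSum

variable {S T : Type*} [Fintype S] [Fintype T] {K : S → T → ℝ} {q r : S → ℝ} {a : ℝ}

noncomputable def renyiSum (a : ℝ) (q r : S → ℝ) : ℝ := ∑ s, q s ^ a * r s ^ (1 - a)

lemma renyiSum_pos (hq : ∀ s, 0 ≤ q s) (hr : ∀ s, 0 ≤ r s) (hqr : ∃ s, 0 < q s ∧ 0 < r s) :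
    0 < renyiSum a q r := by
  obtain ⟨s, hqs, hrs⟩ := hqr
  exact sum_pos' (fun s _ => mul_nonneg (rpow_nonneg (hq s) a) (rpow_nonneg (hr s) _))
    ⟨s, mem_univ s, mul_pos (rpow_pos_of_pos hqs a) (rpow_pos_of_pos hrs _)⟩

lemma sum_filter_pos_eq_renyiSum [DecidablePred fun s => 0 < q s] (ha : 0 < a)
    (hq : ∀ s, 0 ≤ q s) :
    ∑ s ∈ univ.filter (fun s => 0 < q s), q s ^ a * r s ^ (1 - a) = renyiSum a q r :=
  sum_filter_of_ne fun s _ hs =>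
    (hq s).lt_of_ne' fun h => hs (by rw [h, zero_rpow ha.ne', zero_mul])

lemma mul_rpow_mul_mul_rpow_one_sub {k x y : ℝ} (hk : 0 ≤ k) (hx : 0 ≤ x) (hy : 0 ≤ y) :
    (k * x) ^ a * (k * y) ^ (1 - a) = k * (x ^ a * y ^ (1 - a)) := by
  rw [mul_rpow hk hx, mul_rpow hk hy]
  calc k ^ a * x ^ a * (k ^ (1 - a) * y ^ (1 - a))
      = k ^ (a + (1 - a)) * (x ^ a * y ^ (1 - a)) := by
        rw [rpow_add' hk (by simp)]; ring
    _ = k * (x ^ a * y ^ (1 - a)) := by rw [add_sub_cancel, rpow_one]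

lemma renyiSum_eq_sum_sum_channel (hK : ∀ s, IsPMF (K s)) (hq : ∀ s, 0 ≤ q s)
    (hr : ∀ s, 0 ≤ r s) :
    renyiSum a q r = ∑ t, ∑ s, (K s t * q s) ^ a * (K s t * r s) ^ (1 - a) := by
  simp_rw [mul_rpow_mul_mul_rpow_one_sub ((hK _).1 _) (hq _) (hr _)]
  rw [sum_comm]
  exact sum_congr rfl fun s _ => by rw [← sum_mul, (hK s).2, one_mul]

lemma renyiSum_le_renyiSum_channelMap (ha0 : 0 < a) (ha1 : a < 1) (hK : ∀ s, IsPMF (K s))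
    (hq : ∀ s, 0 ≤ q s) (hr : ∀ s, 0 ≤ r s) :
    renyiSum a q r ≤ renyiSum a (channelMap K q) (channelMap K r) := by
  rw [renyiSum_eq_sum_sum_channel hK hq hr]
  exact sum_le_sum fun t _ => sum_rpow_mul_rpow_one_sub_le _ ha0 ha1
    (fun s _ => mul_nonneg ((hK s).1 t) (hq s)) (fun s _ => mul_nonneg ((hK s).1 t) (hr s))

lemma renyiSum_channelMap_le (ha : 1 < a) (hK : ∀ s, IsPMF (K s)) (hq : ∀ s, 0 ≤ q s)
    (hr : ∀ s, 0 ≤ r s) (hqr : ∀ s, 0 < q s → 0 < r s) :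
    renyiSum a (channelMap K q) (channelMap K r) ≤ renyiSum a q r := by
  rw [renyiSum_eq_sum_sum_channel hK hq hr]
  refine sum_le_sum fun t _ => le_sum_rpow_mul_rpow_one_sub _ ha
    (fun s _ => mul_nonneg ((hK s).1 t) (hq s)) (fun s _ => mul_nonneg ((hK s).1 t) (hr s))
    fun s _ h => ?_
  rcases mul_eq_zero.1 h with hKst | hrs
  · rw [hKst, zero_mul]
  · rw [((hq s).eq_of_not_lt fun hqs => (hqr s hqs).ne' hrs).symm, mul_zero]

end RenyiSum

section MaxRatio

variable {S : Type*} {q r : S → ℝ}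

noncomputable def maxRatio (q r : S → ℝ) : ℝ := sSup {x | ∃ s, 0 < q s ∧ x = q s / r s}

lemma div_le_maxRatio [Finite S] {s : S} (hs : 0 < q s) : q s / r s ≤ maxRatio q r :=
  le_csSup ((Set.finite_range fun s => q s / r s).subset
    (by rintro _ ⟨s, -, rfl⟩; exact ⟨s, rfl⟩)).bddAbove ⟨s, hs, rfl⟩

lemma maxRatio_le {M : ℝ} (hq : ∃ s, 0 < q s) (h : ∀ s, 0 < q s → q s / r s ≤ M) :
    maxRatio q r ≤ M := by
  obtain ⟨s, hs⟩ := hq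
  exact csSup_le ⟨_, s, hs, rfl⟩ (by rintro _ ⟨s, hs, rfl⟩; exact h s hs)

lemma le_maxRatio_mul [Finite S] (hq : ∀ s, 0 ≤ q s) (hr : ∀ s, 0 ≤ r s)
    (hqr : ∀ s, 0 < q s → 0 < r s) (s : S) : q s ≤ maxRatio q r * r s := by
  rcases (hq s).eq_or_lt with hqs | hqs
  · rw [← hqs]
    exact mul_nonneg (sSup_nonneg (by rintro _ ⟨s, hs, rfl⟩; exact div_nonneg hs.le (hr s)))
      (hr s)
  · exact (div_le_iff₀ (hqr s hqs)).1 (div_le_maxRatio hqs)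

end MaxRatio

section Renyi

variable {S T : Type*} [Fintype S] [Fintype T] {K : S → T → ℝ} {q r : S → ℝ} {α : ENNReal}

lemma maxRatio_channelMap_le (hK : ∀ s, IsPMF (K s)) (hq : ∀ s, 0 ≤ q s) (hr : ∀ s, 0 ≤ r s)
    (hqr : ∀ s, 0 < q s → 0 < r s) (hpos : ∃ t, 0 < channelMap K q t) :
    maxRatio (channelMap K q) (channelMap K r) ≤ maxRatio q r :=
  maxRatio_le hpos fun t ht =>
    (div_le_iff₀ (channelMap_support_subset (fun s => (hK s).1) hq hr hqr t ht)).2 <|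
      channelMap_le_mul (fun s => (hK s).1) (le_maxRatio_mul hq hr hqr) t

lemma renyiD_top (h : ∀ s, 0 < q s → 0 < r s) : renyiD ⊤ q r = log (maxRatio q r) := by
  rw [renyiD, if_pos rfl, if_pos h, maxRatio]

lemma renyiD_eq_top (hα : 1 < α) (h : ¬ ∀ s, 0 < q s → 0 < r s) : renyiD α q r = ⊤ := by
  rw [renyiD]
  split_ifs <;> simp_all

lemma renyiD_eq_log_renyiSum (hα0 : 0 < α) (hα : α ≠ ⊤) (hq : ∀ s, 0 ≤ q s)
    (h : 1 < α → ∀ s, 0 < q s → 0 < r s) :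
    renyiD α q r = (((α.toReal - 1)⁻¹ * log (renyiSum α.toReal q r) : ℝ) : EReal) := by
  rw [renyiD, if_neg hα, if_neg fun h' => h'.2 (h h'.1),
    sum_filter_pos_eq_renyiSum (ENNReal.toReal_pos hα0.ne' hα) hq]

theorem renyiD_channelMap_le (hα : 0 < α ∧ α ≠ 1) (hK : ∀ s, IsPMF (K s))
    (hq : ∀ s, 0 ≤ q s) (hr : ∀ s, 0 ≤ r s) (hqr : ∃ s, 0 < q s ∧ 0 < r s) :
    renyiD α (channelMap K q) (channelMap K r) ≤ renyiD α q r := by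
  have hKq : ∀ t, 0 ≤ channelMap K q t := channelMap_nonneg (fun s => (hK s).1) hq
  have hKr : ∀ t, 0 ≤ channelMap K r t := channelMap_nonneg (fun s => (hK s).1) hr
  obtain ⟨t, hqt, hrt⟩ := exists_channelMap_pos hK hq hr hqr
  rcases hα.2.lt_or_gt with hlt | hgt
  · have htop := hlt.ne_top
    have ha0 : 0 < α.toReal := ENNReal.toReal_pos hα.1.ne' htop
    have ha1 : α.toReal < 1 := by
      simpa using (ENNReal.toReal_lt_toReal htop ENNReal.one_ne_top).2 hlt
    rw [renyiD_eq_log_renyiSum hα.1 htop hq fun h => absurd h hlt.not_gt,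
      renyiD_eq_log_renyiSum hα.1 htop hKq fun h => absurd h hlt.not_gt, EReal.coe_le_coe_iff]
    exact mul_le_mul_of_nonpos_left (log_le_log (renyiSum_pos hq hr hqr)
      (renyiSum_le_renyiSum_channelMap ha0 ha1 hK hq hr)) (inv_nonpos.2 (by linarith))
  by_cases hsupp : ∀ s, 0 < q s → 0 < r s
  swap
  · rw [renyiD_eq_top hgt hsupp]
    exact le_top
  have hKsupp := channelMap_support_subset (fun s => (hK s).1) hq hr hsupp
  rcases eq_or_ne α ⊤ with rfl | htop
  · rw [renyiD_top hsupp, renyiD_top hKsupp, EReal.coe_le_coe_iff]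
    exact log_le_log ((div_pos hqt hrt).trans_le (div_le_maxRatio hqt))
      (maxRatio_channelMap_le hK hq hr hsupp ⟨t, hqt⟩)
  · have ha1 : 1 < α.toReal := by
      simpa using (ENNReal.toReal_lt_toReal ENNReal.one_ne_top htop).2 hgt
    rw [renyiD_eq_log_renyiSum hα.1 htop hq fun _ => hsupp,
      renyiD_eq_log_renyiSum hα.1 htop hKq fun _ => hKsupp, EReal.coe_le_coe_iff]
    exact mul_le_mul_of_nonneg_left (log_le_log (renyiSum_pos hKq hKr ⟨t, hqt, hrt⟩)
      (renyiSum_channelMap_le ha1 hK hq hr hsupp)) (inv_nonneg.2 (by linarith))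

end Renyi

def prodChannel {S S' T T' : Type*} (K : S → T → ℝ) (K' : S' → T' → ℝ) (s : S × S')
    (t : T × T') : ℝ :=
  K s.1 t.1 * K' s.2 t.2

lemma channelMap_prodChannel {S S' T T' : Type*} [Fintype S] [Fintype S'] (K : S → T → ℝ)
    (K' : S' → T' → ℝ) (q : S → ℝ) (q' : S' → ℝ) (t : T × T') :
    channelMap (prodChannel K K') (fun s => q s.1 * q' s.2) t =
      channelMap K q t.1 * channelMap K' q' t.2 := by
  rw [channelMap, channelMap, channelMap, Fintype.sum_mul_sum, Fintype.sum_prod_type]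
  exact sum_congr rfl fun _ _ => sum_congr rfl fun _ _ => by rw [prodChannel]; ring

def swapSnd {X Y : Type*} (t : (X × Y) × (X × Y)) : (X × Y) × (X × Y) :=
  ((t.1.1, t.2.2), (t.2.1, t.1.2))

lemma Jalpha_channelMap_prodChannel {X Y A B : Type*} [Fintype X] [Fintype Y] [Fintype A]
    [Fintype B] (α : ENNReal) (WA : X → A → ℝ) (WB : Y → B → ℝ) (p : X × Y → ℝ) :
    Jalpha α (channelMap (prodChannel WA WB) p) =
      renyiD α (channelMap (prodChannel (prodChannel WA WB) (prodChannel WA WB))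
          (fun s => p s.1 * p s.2))
        (channelMap (prodChannel (prodChannel WA WB) (prodChannel WA WB))
          ((fun s => p s.1 * p s.2) ∘ swapSnd)) := by
  have hswap : ∀ s t, prodChannel (prodChannel WA WB) (prodChannel WA WB) (swapSnd s)
      (swapSnd t) = prodChannel (prodChannel WA WB) (prodChannel WA WB) s t := fun _ _ => by
    simp only [prodChannel, swapSnd]; ring
  unfold Jalpha
  congr 1 <;> funext t
  · rw [channelMap_prodChannel]
  · rw [channelMap_comp_of_involutive (fun _ => rfl) (fun _ => rfl) hswap,
      channelMap_prodChannel]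
    rfl

/-- data processing: if `A → X → Y → B` is a Markov chain, realized by
channels `W_A` from `X` to `A` and `W_B` from `Y` to `B` applied to a pmf `p` on
`X × Y`, then `J_α(p_AB) ≤ J_α(p)` for every `α ∈ (0,1) ∪ (1,∞]`. -/
theorem Jalpha_data_processing {X Y A B : Type*} [Fintype X] [Fintype Y]
    [Fintype A] [Fintype B]
    (p : X × Y → ℝ) (hp : IsPMF p)
    (WA : X → A → ℝ) (hWA : ∀ x, IsPMF (WA x))
    (WB : Y → B → ℝ) (hWB : ∀ y, IsPMF (WB y))
    (α : ENNReal) (hα : 0 < α ∧ α ≠ 1) :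
    Jalpha α (fun ab : A × B => ∑ x, ∑ y, WA x ab.1 * p (x, y) * WB y ab.2)
      ≤ Jalpha α p := by
  have hpAB : (fun ab : A × B => ∑ x, ∑ y, WA x ab.1 * p (x, y) * WB y ab.2) =
      channelMap (prodChannel WA WB) p := by
    funext ab
    rw [channelMap, Fintype.sum_prod_type]
    exact sum_congr rfl fun _ _ => sum_congr rfl fun _ _ => by rw [prodChannel]; ring
  have hW : ∀ s, IsPMF (prodChannel WA WB s) := fun s => (hWA s.1).prod (hWB s.2)
  obtain ⟨z, hz⟩ := hp.exists_pos
  rw [hpAB, Jalpha_channelMap_prodChannel]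
  exact renyiD_channelMap_le hα (fun s => (hW s.1).prod (hW s.2))
    (fun _ => mul_nonneg (hp.1 _) (hp.1 _)) (fun _ => mul_nonneg (hp.1 _) (hp.1 _))
    ⟨(z, z), mul_pos hz hz, mul_pos hz hz⟩
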